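/- arXiv:0901.1403 — 3 statements merged into one kernel-verified Lean document; each statement's English description precedes it below -/
import Mathlib

section
/- Let $\mu$ be a probability measure, $u$ a measurable function, and $y \geq 0$ with $\mu(y) = 1$. Then for every $t > 0$, $\mu(u y) \leq \frac{1}{t} \log(\mu(e^{t u})) + \frac{1}{t} \mu(y \log y)$ (assuming all integrals are finite). -/
open MeasureTheory Real

lemma young_exp_log (a b : ℝ) (hb : 0 ≤ b) :
    a * b ≤ Real.exp a + b * Real.log b - b := by
  rcases hb.eq_or_lt with h | h
  · simp [← h]
    positivity
  · have h1 : (a - Real.log b) + 1 ≤ Real.exp (a - Real.log b) := Real.add_one_le_exp _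
    have h2 : Real.exp (a - Real.log b) = Real.exp a / b := by
      rw [Real.exp_sub, Real.exp_log h]
    have h3 : b * ((a - Real.log b) + 1) ≤ b * (Real.exp a / b) :=
      mul_le_mul_of_nonneg_left (h2 ▸ h1) h.le
    have h4 : b * (Real.exp a / b) = Real.exp a := by field_simp
    nlinarith [h3, h4]

/-- Deuschel–Stroock relative entropy inequality. -/
theorem deuschel_stroock_entropy_inequality {X : Type*} [MeasurableSpace X]
    (μ : Measure X) [IsProbabilityMeasure μ] (u y : X → ℝ) (t : ℝ) (ht : 0 < t)
    (hu : Measurable u) (hy : Measurable y) (hy0 : ∀ x, 0 ≤ y x)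
    (hy1 : ∫ x, y x ∂μ = 1)
    (h1 : Integrable (fun x => u x * y x) μ)
    (h2 : Integrable (fun x => Real.exp (t * u x)) μ)
    (h3 : Integrable (fun x => y x * Real.log (y x)) μ) :
    ∫ x, u x * y x ∂μ ≤
      (1 / t) * Real.log (∫ x, Real.exp (t * u x) ∂μ)
        + (1 / t) * ∫ x, y x * Real.log (y x) ∂μ := by
  set Z : ℝ := ∫ x, Real.exp (t * u x) ∂μ with hZ
  have hZpos : 0 < Z := integral_exp_pos h2
  have hyint : Integrable y μ := by
    by_contra hc
    rw [integral_undef hc] at hy1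
    norm_num at hy1
  -- pointwise: (t * u x - log Z) * y x ≤ exp (t * u x)/Z + y x * log (y x) - y x
  have hpt : ∀ x, (t * u x - Real.log Z) * y x
      ≤ Real.exp (t * u x) / Z + y x * Real.log (y x) - y x := by
    intro x
    have := young_exp_log (t * u x - Real.log Z) (y x) (hy0 x)
    have he : Real.exp (t * u x - Real.log Z) = Real.exp (t * u x) / Z := by
      rw [Real.exp_sub, Real.exp_log hZpos]
    linarith [he ▸ this]
  have hfint : Integrable (fun x => (t * u x - Real.log Z) * y x) μ := by
    have : (fun x => (t * u x - Real.log Z) * y x)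
        = fun x => t * (u x * y x) - Real.log Z * y x := by
      funext x; ring
    rw [this]
    exact ((h1.const_mul t).sub (hyint.const_mul _))
  have hgint : Integrable
      (fun x => Real.exp (t * u x) / Z + y x * Real.log (y x) - y x) μ := by
    exact ((h2.div_const Z).add h3).sub hyint
  have hmono := integral_mono hfint hgint hpt
  have hleft : ∫ x, (t * u x - Real.log Z) * y x ∂μ
      = t * ∫ x, u x * y x ∂μ - Real.log Z := by
    have : (fun x => (t * u x - Real.log Z) * y x)
        = fun x => t * (u x * y x) - Real.log Z * y x := by
      funext x; ring
    rw [this, integral_sub (h1.const_mul t) (hyint.const_mul _),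
      integral_const_mul, integral_const_mul, hy1, mul_one]
  have haddint : Integrable (fun x => Real.exp (t * u x) / Z + y x * Real.log (y x)) μ :=
    (h2.div_const Z).add h3
  have hright : ∫ x, (Real.exp (t * u x) / Z + y x * Real.log (y x) - y x) ∂μ
      = ∫ x, y x * Real.log (y x) ∂μ := by
    rw [integral_sub haddint hyint,
      integral_add (h2.div_const Z) h3, integral_div, hy1, ← hZ,
      div_self hZpos.ne']
    ring
  rw [hleft, hright] at hmono
  have key : t * ∫ x, u x * y x ∂μ
      ≤ Real.log Z + ∫ x, y x * Real.log (y x) ∂μ := by linarith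
  have h1t : (0:ℝ) ≤ 1 / t := by positivity
  calc ∫ x, u x * y x ∂μ = (1 / t) * (t * ∫ x, u x * y x ∂μ) := by
        field_simp
    _ ≤ (1 / t) * (Real.log Z + ∫ x, y x * Real.log (y x) ∂μ) :=
        mul_le_mul_of_nonneg_left key h1t
    _ = (1 / t) * Real.log Z + (1 / t) * ∫ x, y x * Real.log (y x) ∂μ := by ring
end

section
/- Let $q \in (1,2]$ with conjugate $p$, let $\mu$ be a probability measure and $f \geq 0$, $W$ bounded measurable functions. Then $\mu(f^q; W) \leq 2^{q/p} q\, (\mu f^q)^{1/p} \big\{ (\mu\otimes\tilde\mu)\big(|f - \tilde f|^q |W - \tilde W|^q\big) \big\}^{1/q}$, where $\tilde\mu$ is an independent copy of $\mu$. -/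
open MeasureTheory Real

-- helper: bounded measurable is integrable on finite measure
private lemma integrable_of_bdd {X : Type*} [MeasurableSpace X] {μ : Measure X}
    [IsFiniteMeasure μ] {g : X → ℝ} (hg : Measurable g) {C : ℝ} (h : ∀ x, |g x| ≤ C) :
    Integrable g μ :=
  (integrable_const C).mono' hg.aestronglyMeasurable
    (Filter.Eventually.of_forall fun x => by simpa [Real.norm_eq_abs] using h x)

private lemma memLp_of_bdd {X : Type*} [MeasurableSpace X] {μ : Measure X}
    [IsFiniteMeasure μ] {g : X → ℝ} (hg : Measurable g) {C : ℝ} (h : ∀ x, |g x| ≤ C)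
    (r : ENNReal) : MemLp g r μ :=
  MemLp.of_bound hg.aestronglyMeasurable C
    (Filter.Eventually.of_forall fun x => by simpa [Real.norm_eq_abs] using h x)

-- key pointwise MVT bound
private lemma rpow_sub_rpow_le {q a b : ℝ} (hq : 1 ≤ q) (hb : 0 ≤ b) (hba : b ≤ a) :
    a ^ q - b ^ q ≤ q * a ^ (q - 1) * (a - b) := by
  have ha : 0 ≤ a := hb.trans hba
  have key := norm_image_sub_le_of_norm_deriv_le_segment'
    (f := fun x : ℝ => x ^ q) (f' := fun x : ℝ => q * x ^ (q - 1))
    (a := b) (b := a) (C := q * a ^ (q - 1))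
    (fun x _ => (Real.hasDerivAt_rpow_const (Or.inr hq)).hasDerivWithinAt)
    (fun x hx => by
      have hx0 : (0:ℝ) ≤ x := le_trans hb hx.1
      have h2 : x ^ (q - 1) ≤ a ^ (q - 1) :=
        Real.rpow_le_rpow hx0 hx.2.le (by linarith)
      have h3 : q * x ^ (q - 1) ≤ q * a ^ (q - 1) :=
        mul_le_mul_of_nonneg_left h2 (by linarith)
      show ‖q * x ^ (q - 1)‖ ≤ q * a ^ (q - 1)
      rw [Real.norm_of_nonneg (by positivity)]
      exact h3) a ⟨hba, le_refl a⟩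
  rw [Real.norm_eq_abs] at key
  calc a ^ q - b ^ q ≤ |a ^ q - b ^ q| := le_abs_self _
    _ ≤ q * a ^ (q - 1) * (a - b) := key

private lemma abs_rpow_sub_rpow_le {q a b : ℝ} (hq : 1 ≤ q) (ha : 0 ≤ a) (hb : 0 ≤ b) :
    |a ^ q - b ^ q| ≤ q * (a + b) ^ (q - 1) * |a - b| := by
  have hq1 : (0:ℝ) ≤ q - 1 := by linarith
  rcases le_total b a with h | h
  · rw [abs_of_nonneg (sub_nonneg.mpr (Real.rpow_le_rpow hb h (by linarith))),
      abs_of_nonneg (sub_nonneg.mpr h)]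
    calc a ^ q - b ^ q ≤ q * a ^ (q - 1) * (a - b) := rpow_sub_rpow_le hq hb h
      _ ≤ q * (a + b) ^ (q - 1) * (a - b) := by
          have := Real.rpow_le_rpow ha (by linarith : a ≤ a + b) hq1
          have h2 : q * a ^ (q-1) ≤ q * (a+b) ^ (q-1) :=
            mul_le_mul_of_nonneg_left this (by linarith)
          exact mul_le_mul_of_nonneg_right h2 (by linarith)
  · rw [abs_of_nonpos (sub_nonpos.mpr (Real.rpow_le_rpow ha h (by linarith))),
      abs_of_nonpos (sub_nonpos.mpr h), neg_sub, neg_sub]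
    calc b ^ q - a ^ q ≤ q * b ^ (q - 1) * (b - a) := rpow_sub_rpow_le hq ha h
      _ ≤ q * (a + b) ^ (q - 1) * (b - a) := by
          have := Real.rpow_le_rpow hb (by linarith : b ≤ a + b) hq1
          have h2 : q * b ^ (q-1) ≤ q * (a+b) ^ (q-1) :=
            mul_le_mul_of_nonneg_left this (by linarith)
          exact mul_le_mul_of_nonneg_right h2 (by linarith)

private lemma add_rpow_le_two_rpow {q a b : ℝ} (hq : 0 ≤ q) (ha : 0 ≤ a) (hb : 0 ≤ b) :
    (a + b) ^ q ≤ 2 ^ q * (a ^ q + b ^ q) := by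
  rcases le_total a b with h | h
  · calc (a + b) ^ q ≤ (2 * b) ^ q :=
        Real.rpow_le_rpow (by linarith) (by linarith) hq
      _ = 2 ^ q * b ^ q := Real.mul_rpow (by norm_num) hb
      _ ≤ 2 ^ q * (a ^ q + b ^ q) := by
          have : (0:ℝ) ≤ a ^ q := Real.rpow_nonneg ha q
          nlinarith [Real.rpow_nonneg (by norm_num : (0:ℝ) ≤ 2) q]
  · calc (a + b) ^ q ≤ (2 * a) ^ q :=
        Real.rpow_le_rpow (by linarith) (by linarith) hq
      _ = 2 ^ q * a ^ q := Real.mul_rpow (by norm_num) ha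
      _ ≤ 2 ^ q * (a ^ q + b ^ q) := by
          have : (0:ℝ) ≤ b ^ q := Real.rpow_nonneg hb q
          nlinarith [Real.rpow_nonneg (by norm_num : (0:ℝ) ≤ 2) q]

set_option maxHeartbeats 1000000 in
/-- Covariance bound of Lemma 4.1 (intermediate form): the covariance of `f^q`
and `W` is controlled by a doubled-variable `q`-norm. -/
theorem covariance_holder_bound {X : Type*} [MeasurableSpace X]
    (μ : Measure X) [IsProbabilityMeasure μ]
    (q p : ℝ) (hq1 : 1 < q) (hq2 : q ≤ 2) (hpq : 1 / p + 1 / q = 1)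
    (f W : X → ℝ) (hf : Measurable f) (hW : Measurable W)
    (hf0 : ∀ x, 0 ≤ f x) (Cf : ℝ) (hfb : ∀ x, f x ≤ Cf)
    (CW : ℝ) (hWb : ∀ x, |W x| ≤ CW) :
    (∫ x, f x ^ q * W x ∂μ) - (∫ x, f x ^ q ∂μ) * (∫ x, W x ∂μ)
      ≤ (2:ℝ) ^ (q / p) * q * (∫ x, f x ^ q ∂μ) ^ (1 / p) *
        (∫ z, |f z.1 - f z.2| ^ q * |W z.1 - W z.2| ^ q ∂(μ.prod μ)) ^ (1 / q) := by
  -- basic exponent facts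
  have hq0 : (0:ℝ) < q := by linarith
  have hinvq : 1 / q < 1 := by rw [div_lt_one hq0]; linarith
  have hinvq2 : (1:ℝ)/2 ≤ 1/q := by rw [div_le_div_iff₀ (by norm_num) hq0]; linarith
  have h1p : 1/p = 1 - 1/q := by linarith
  have hp_pos : (0:ℝ) < 1/p := by rw [h1p]; linarith
  have hp_half : 1/p ≤ 1/2 := by rw [h1p]; linarith
  have hppos : (0:ℝ) < p := one_div_pos.mp hp_pos
  have hp2 : (2:ℝ) ≤ p := by
    rw [div_le_div_iff₀ hppos (by norm_num)] at hp_half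
    linarith
  have hp1 : (1:ℝ) < p := by linarith
  have hcon : Real.HolderConjugate p q := Real.holderConjugate_iff.mpr ⟨hp1, by rw [← one_div, ← one_div]; exact hpq⟩
  have hqne : q ≠ 0 := ne_of_gt hq0
  have hpne : p ≠ 0 := ne_of_gt hppos
  have hkey : (q - 1) * p = q := by
    field_simp at hpq
    nlinarith [hpq]
  -- nonemptiness and constants
  have hne : Nonempty X := by
    by_contra h
    rw [not_nonempty_iff] at h
    have h1 : (Set.univ : Set X) = ∅ := Set.univ_eq_empty_iff.mpr h
    have h2 : μ Set.univ = 1 := measure_univ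
    rw [h1, measure_empty] at h2
    exact zero_ne_one h2
  obtain ⟨x₀⟩ := hne
  have hCf : (0:ℝ) ≤ Cf := (hf0 x₀).trans (hfb x₀)
  have hCW : (0:ℝ) ≤ CW := (abs_nonneg _).trans (hWb x₀)
  set P := μ.prod μ with hP
  set A := ∫ x, f x ^ q ∂μ with hA
  set B := ∫ z, |f z.1 - f z.2| ^ q * |W z.1 - W z.2| ^ q ∂P with hB
  have hA0 : 0 ≤ A := integral_nonneg fun x => Real.rpow_nonneg (hf0 x) q
  have hB0 : 0 ≤ B := integral_nonneg fun z =>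
    mul_nonneg (Real.rpow_nonneg (abs_nonneg _) q) (Real.rpow_nonneg (abs_nonneg _) q)
  -- measurability
  have hfq_m : Measurable fun x => f x ^ q :=
    (Real.continuous_rpow_const hq0.le).measurable.comp hf
  have hf1 : Measurable fun z : X × X => f z.1 := hf.comp measurable_fst
  have hf2 : Measurable fun z : X × X => f z.2 := hf.comp measurable_snd
  have hW1 : Measurable fun z : X × X => W z.1 := hW.comp measurable_fst
  have hW2 : Measurable fun z : X × X => W z.2 := hW.comp measurable_snd
  have hfq1m : Measurable fun z : X × X => f z.1 ^ q := hfq_m.comp measurable_fst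
  have hfq2m : Measurable fun z : X × X => f z.2 ^ q := hfq_m.comp measurable_snd
  -- pointwise bounds
  have hfqb : ∀ x, f x ^ q ≤ Cf ^ q := fun x => Real.rpow_le_rpow (hf0 x) (hfb x) hq0.le
  have habs : ∀ a b : ℝ, |a - b| ≤ |a| + |b| := fun a b => by
    simpa using abs_sub_le a 0 b
  have hΔf : ∀ z : X × X, |f z.1 - f z.2| ≤ 2 * Cf := fun z => by
    have := habs (f z.1) (f z.2)
    rw [abs_of_nonneg (hf0 _), abs_of_nonneg (hf0 _)] at this
    linarith [hfb z.1, hfb z.2]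
  have hΔW : ∀ z : X × X, |W z.1 - W z.2| ≤ 2 * CW := fun z => by
    have := habs (W z.1) (W z.2)
    linarith [hWb z.1, hWb z.2]
  -- the four product terms
  have hT1 : Integrable (fun z : X × X => f z.1 ^ q * W z.1) P :=
    integrable_of_bdd (hfq1m.mul hW1) (C := Cf ^ q * CW) fun z => by
      rw [abs_mul, abs_of_nonneg (Real.rpow_nonneg (hf0 _) q)]
      exact mul_le_mul (hfqb _) (hWb _) (abs_nonneg _) (Real.rpow_nonneg hCf q)
  have hT2 : Integrable (fun z : X × X => f z.1 ^ q * W z.2) P :=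
    integrable_of_bdd (hfq1m.mul hW2) (C := Cf ^ q * CW) fun z => by
      rw [abs_mul, abs_of_nonneg (Real.rpow_nonneg (hf0 _) q)]
      exact mul_le_mul (hfqb _) (hWb _) (abs_nonneg _) (Real.rpow_nonneg hCf q)
  have hT3 : Integrable (fun z : X × X => f z.2 ^ q * W z.1) P :=
    integrable_of_bdd (hfq2m.mul hW1) (C := Cf ^ q * CW) fun z => by
      rw [abs_mul, abs_of_nonneg (Real.rpow_nonneg (hf0 _) q)]
      exact mul_le_mul (hfqb _) (hWb _) (abs_nonneg _) (Real.rpow_nonneg hCf q)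
  have hT4 : Integrable (fun z : X × X => f z.2 ^ q * W z.2) P :=
    integrable_of_bdd (hfq2m.mul hW2) (C := Cf ^ q * CW) fun z => by
      rw [abs_mul, abs_of_nonneg (Real.rpow_nonneg (hf0 _) q)]
      exact mul_le_mul (hfqb _) (hWb _) (abs_nonneg _) (Real.rpow_nonneg hCf q)
  -- marginal computations
  have e1 : ∫ z, f z.1 ^ q * W z.1 ∂P = ∫ x, f x ^ q * W x ∂μ := by
    simpa using integral_prod_mul (μ := μ) (ν := μ) (fun x => f x ^ q * W x) fun _ => (1:ℝ)
  have e4 : ∫ z, f z.2 ^ q * W z.2 ∂P = ∫ x, f x ^ q * W x ∂μ := by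
    simpa using integral_prod_mul (μ := μ) (ν := μ) (fun _ => (1:ℝ)) fun x => f x ^ q * W x
  have e2 : ∫ z, f z.1 ^ q * W z.2 ∂P = A * ∫ x, W x ∂μ :=
    integral_prod_mul (μ := μ) (ν := μ) (fun x => f x ^ q) W
  have e3 : ∫ z, f z.2 ^ q * W z.1 ∂P = A * ∫ x, W x ∂μ := by
    have h := integral_prod_mul (μ := μ) (ν := μ) W fun x => f x ^ q
    calc ∫ z, f z.2 ^ q * W z.1 ∂P = ∫ z, W z.1 * f z.2 ^ q ∂P := by
          refine integral_congr_ae (Filter.Eventually.of_forall fun z => ?_); ring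
      _ = (∫ x, W x ∂μ) * A := h
      _ = A * ∫ x, W x ∂μ := by ring
  -- the covariance identity
  have Ieq : (fun z : X × X => (f z.1 ^ q - f z.2 ^ q) * (W z.1 - W z.2))
      = fun z : X × X => (f z.1 ^ q * W z.1 + f z.2 ^ q * W z.2)
        - (f z.1 ^ q * W z.2 + f z.2 ^ q * W z.1) := funext fun z => by ring
  have hIprod : Integrable (fun z : X × X => (f z.1 ^ q - f z.2 ^ q) * (W z.1 - W z.2)) P := by
    rw [Ieq]; exact (hT1.add hT4).sub (hT2.add hT3)
  have hS1 : Integrable (fun z : X × X => f z.1 ^ q * W z.1 + f z.2 ^ q * W z.2) P := by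
    exact hT1.add hT4
  have hS2 : Integrable (fun z : X × X => f z.1 ^ q * W z.2 + f z.2 ^ q * W z.1) P := by
    exact hT2.add hT3
  have hid : ∫ z, (f z.1 ^ q - f z.2 ^ q) * (W z.1 - W z.2) ∂P
      = 2 * ((∫ x, f x ^ q * W x ∂μ) - A * ∫ x, W x ∂μ) := by
    rw [Ieq, integral_sub hS1 hS2, integral_add hT1 hT4,
      integral_add hT2 hT3, e1, e2, e3, e4]
    ring
  -- define G and H
  set G : X × X → ℝ := fun z => (f z.1 + f z.2) ^ (q - 1) with hG
  set H : X × X → ℝ := fun z => |f z.1 - f z.2| * |W z.1 - W z.2| with hH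
  have hG0 : ∀ z, 0 ≤ G z := fun z => Real.rpow_nonneg (add_nonneg (hf0 _) (hf0 _)) _
  have hH0 : ∀ z, 0 ≤ H z := fun z => mul_nonneg (abs_nonneg _) (abs_nonneg _)
  have hGle : ∀ z, G z ≤ (2 * Cf) ^ (q - 1) := fun z =>
    Real.rpow_le_rpow (add_nonneg (hf0 _) (hf0 _))
      (by linarith [hfb z.1, hfb z.2]) (by linarith)
  have hHle : ∀ z, H z ≤ 2 * Cf * (2 * CW) := fun z =>
    mul_le_mul (hΔf z) (hΔW z) (abs_nonneg _) (by linarith)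
  have hGm : Measurable G :=
    (Real.continuous_rpow_const (by linarith)).measurable.comp (hf1.add hf2)
  have hHm : Measurable H := (hf1.sub hf2).abs.mul (hW1.sub hW2).abs
  -- step 1: pointwise MVT bound
  have hRHS1 : Integrable (fun z : X × X => q * (G z * H z)) P :=
    integrable_of_bdd ((hGm.mul hHm).const_mul q)
      (C := q * ((2 * Cf) ^ (q - 1) * (2 * Cf * (2 * CW)))) fun z => by
      rw [abs_of_nonneg (mul_nonneg hq0.le (mul_nonneg (hG0 z) (hH0 z)))]
      exact mul_le_mul_of_nonneg_left
        (mul_le_mul (hGle z) (hHle z) (hH0 z) (Real.rpow_nonneg (by linarith) _)) hq0.le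
  have step1 : ∫ z, (f z.1 ^ q - f z.2 ^ q) * (W z.1 - W z.2) ∂P
      ≤ ∫ z, q * (G z * H z) ∂P := by
    refine integral_mono hIprod hRHS1 fun z => ?_
    calc (f z.1 ^ q - f z.2 ^ q) * (W z.1 - W z.2)
        ≤ |f z.1 ^ q - f z.2 ^ q| * |W z.1 - W z.2| := by
          rw [← abs_mul]; exact le_abs_self _
      _ ≤ q * (f z.1 + f z.2) ^ (q - 1) * |f z.1 - f z.2| * |W z.1 - W z.2| :=
          mul_le_mul_of_nonneg_right
            (abs_rpow_sub_rpow_le hq1.le (hf0 _) (hf0 _)) (abs_nonneg _)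
      _ = q * (G z * H z) := by rw [hG, hH]; ring
  have hGle' : ∀ z, |G z| ≤ (2 * Cf) ^ (q - 1) := fun z => by
    rw [abs_of_nonneg (hG0 z)]; exact hGle z
  have hHle' : ∀ z, |H z| ≤ 2 * Cf * (2 * CW) := fun z => by
    rw [abs_of_nonneg (hH0 z)]; exact hHle z
  -- Hölder
  have hold : ∫ z, G z * H z ∂P
      ≤ (∫ z, G z ^ p ∂P) ^ (1/p) * (∫ z, H z ^ q ∂P) ^ (1/q) :=
    integral_mul_le_Lp_mul_Lq_of_nonneg hcon
      (Filter.Eventually.of_forall hG0) (Filter.Eventually.of_forall hH0)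
      (memLp_of_bdd hGm hGle' _) (memLp_of_bdd hHm hHle' _)
  -- identify the two Hölder factors
  have hGp : ∫ z, G z ^ p ∂P = ∫ z, (f z.1 + f z.2) ^ q ∂P := by
    refine integral_congr_ae (Filter.Eventually.of_forall fun z => ?_)
    show ((f z.1 + f z.2) ^ (q - 1)) ^ p = (f z.1 + f z.2) ^ q
    rw [← Real.rpow_mul (add_nonneg (hf0 _) (hf0 _)), hkey]
  have hHq : ∫ z, H z ^ q ∂P = B := by
    refine integral_congr_ae (Filter.Eventually.of_forall fun z => ?_)
    show (|f z.1 - f z.2| * |W z.1 - W z.2|) ^ q = _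
    exact Real.mul_rpow (abs_nonneg _) (abs_nonneg _)
  -- bound the G factor
  have hfq1i : Integrable (fun z : X × X => f z.1 ^ q) P :=
    integrable_of_bdd hfq1m (C := Cf ^ q) fun z => by
      rw [abs_of_nonneg (Real.rpow_nonneg (hf0 _) q)]; exact hfqb _
  have hfq2i : Integrable (fun z : X × X => f z.2 ^ q) P :=
    integrable_of_bdd hfq2m (C := Cf ^ q) fun z => by
      rw [abs_of_nonneg (Real.rpow_nonneg (hf0 _) q)]; exact hfqb _
  have hm1 : ∫ z, f z.1 ^ q ∂P = A := by
    simpa using integral_prod_mul (μ := μ) (ν := μ) (fun x => f x ^ q) fun _ => (1:ℝ)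
  have hm2 : ∫ z, f z.2 ^ q ∂P = A := by
    simpa using integral_prod_mul (μ := μ) (ν := μ) (fun _ => (1:ℝ)) fun x => f x ^ q
  have hsum : ∫ z, (f z.1 + f z.2) ^ q ∂P ≤ 2 ^ (q + 1) * A := by
    have hmono : ∫ z, (f z.1 + f z.2) ^ q ∂P
        ≤ ∫ z, 2 ^ q * (f z.1 ^ q + f z.2 ^ q) ∂P := by
      refine integral_mono
        (integrable_of_bdd
          ((Real.continuous_rpow_const hq0.le).measurable.comp (hf1.add hf2))
          (C := (2 * Cf) ^ q) fun z => by
            rw [abs_of_nonneg (Real.rpow_nonneg (add_nonneg (hf0 _) (hf0 _)) q)]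
            exact Real.rpow_le_rpow (add_nonneg (hf0 _) (hf0 _))
              (by linarith [hfb z.1, hfb z.2]) hq0.le)
        ((hfq1i.add hfq2i).const_mul _) fun z =>
        add_rpow_le_two_rpow hq0.le (hf0 _) (hf0 _)
    have hcomp : ∫ z, 2 ^ q * (f z.1 ^ q + f z.2 ^ q) ∂P = 2 ^ q * (A + A) := by
      rw [integral_const_mul, integral_add hfq1i hfq2i, hm1, hm2]
    have h2q : (2:ℝ) ^ (q + 1) * A = 2 ^ q * (A + A) := by
      rw [Real.rpow_add (by norm_num : (0:ℝ) < 2), Real.rpow_one]; ring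
    rw [h2q]; rw [hcomp] at hmono; exact hmono
  have hGbound : (∫ z, (f z.1 + f z.2) ^ q ∂P) ^ (1/p)
      ≤ 2 ^ ((q + 1)/p) * A ^ (1/p) := by
    calc (∫ z, (f z.1 + f z.2) ^ q ∂P) ^ (1/p)
        ≤ ((2:ℝ) ^ (q + 1) * A) ^ (1/p) :=
          Real.rpow_le_rpow
            (integral_nonneg fun z => Real.rpow_nonneg (add_nonneg (hf0 _) (hf0 _)) q)
            hsum hp_pos.le
      _ = 2 ^ ((q + 1)/p) * A ^ (1/p) := by
          rw [Real.mul_rpow (Real.rpow_nonneg (by norm_num) _) hA0,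
            ← Real.rpow_mul (by norm_num), mul_one_div]
  -- assemble the chain
  have hI : ∫ z, (f z.1 ^ q - f z.2 ^ q) * (W z.1 - W z.2) ∂P
      ≤ q * (2 ^ ((q + 1)/p) * A ^ (1/p) * B ^ (1/q)) := by
    calc ∫ z, (f z.1 ^ q - f z.2 ^ q) * (W z.1 - W z.2) ∂P
        ≤ ∫ z, q * (G z * H z) ∂P := step1
      _ = q * ∫ z, G z * H z ∂P := integral_const_mul q _
      _ ≤ q * ((∫ z, G z ^ p ∂P) ^ (1/p) * (∫ z, H z ^ q ∂P) ^ (1/q)) :=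
          mul_le_mul_of_nonneg_left hold hq0.le
      _ = q * ((∫ z, (f z.1 + f z.2) ^ q ∂P) ^ (1/p) * B ^ (1/q)) := by
          rw [hGp, hHq]
      _ ≤ q * (2 ^ ((q + 1)/p) * A ^ (1/p) * B ^ (1/q)) :=
          mul_le_mul_of_nonneg_left
            (mul_le_mul_of_nonneg_right hGbound (Real.rpow_nonneg hB0 _)) hq0.le
  -- final arithmetic
  have h21 : (2:ℝ) ^ (1/p) ≤ 2 := by
    calc (2:ℝ) ^ (1/p) ≤ 2 ^ (1:ℝ) :=
        Real.rpow_le_rpow_of_exponent_le (by norm_num) (by linarith)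
      _ = 2 := Real.rpow_one 2
  have h2p : (2:ℝ) ^ ((q + 1)/p) ≤ 2 ^ (q/p) * 2 := by
    rw [show (q + 1)/p = q/p + 1/p by ring, Real.rpow_add (by norm_num : (0:ℝ) < 2)]
    exact mul_le_mul_of_nonneg_left h21 (Real.rpow_nonneg (by norm_num) _)
  have hK0 : 0 ≤ A ^ (1/p) * B ^ (1/q) :=
    mul_nonneg (Real.rpow_nonneg hA0 _) (Real.rpow_nonneg hB0 _)
  calc (∫ x, f x ^ q * W x ∂μ) - A * ∫ x, W x ∂μ
      = (1/2) * ∫ z, (f z.1 ^ q - f z.2 ^ q) * (W z.1 - W z.2) ∂P := by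
        rw [hid]; ring
    _ ≤ (1/2) * (q * (2 ^ ((q + 1)/p) * A ^ (1/p) * B ^ (1/q))) := by linarith [hI]
    _ ≤ 2 ^ (q/p) * q * A ^ (1/p) * B ^ (1/q) := by
        nlinarith [mul_nonneg (mul_nonneg hq0.le hK0) (sub_nonneg.mpr h2p),
          Real.rpow_nonneg (by norm_num : (0:ℝ) ≤ 2) (q/p)]
end

section
/- Let $P, G : \mathbb{N} \to [0,\infty)$, $J, K' > 0$, $q > 1$ with $J \leq 1$ and $JK' + J^q K' J^{q-1} \leq 1$. Suppose $P(4) \leq G(4) + J^q K' P(8)$ and $P(4k) \leq G(4k) + J^q K' P(4k-4) + J^q K' P(4k+4)$ for all integers $k \geq 2$. Then for every integer $n \geq 2$: $P(4n) \leq \frac{1}{1 - J^q K' J^{q-1}} \sum_{m=0}^{n-2} J^{m(q-1)} G(4n - 4m) + J^{(n-1)(q-1)} G(4) + J^{q-1} P(4n+4)$. -/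
open Finset

/-- Recursive estimate (Lemma 5.2-1 of the paper). -/
theorem recursive_estimate (P G : ℕ → ℝ) (hP : ∀ n, 0 ≤ P n) (hG : ∀ n, 0 ≤ G n)
    (J K' q : ℝ) (hJ : 0 < J) (hK' : 0 < K') (hq : 1 < q)
    (hJ1 : J ≤ 1) (hJK : J * K' + J ^ q * K' * J ^ (q - 1) ≤ 1)
    (hbase : P 4 ≤ G 4 + J ^ q * K' * P 8)
    (hrec : ∀ k : ℕ, 2 ≤ k →
      P (4 * k) ≤ G (4 * k) + J ^ q * K' * P (4 * k - 4) + J ^ q * K' * P (4 * k + 4)) :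
    ∀ n : ℕ, 2 ≤ n →
      P (4 * n) ≤ (1 / (1 - J ^ q * K' * J ^ (q - 1))) *
          ∑ m ∈ Finset.range (n - 1), J ^ ((m : ℝ) * (q - 1)) * G (4 * n - 4 * m)
        + J ^ (((n : ℝ) - 1) * (q - 1)) * G 4
        + J ^ (q - 1) * P (4 * n + 4) := by
  set b := J ^ (q - 1) with hbdef
  set a := J ^ q * K' with hadef
  have hb : 0 < b := Real.rpow_pos_of_pos hJ _
  have ha : 0 < a := mul_pos (Real.rpow_pos_of_pos hJ _) hK'
  have hsplit : J ^ q = J * b := by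
    have h := Real.rpow_add hJ 1 (q - 1)
    rw [Real.rpow_one] at h
    rw [hbdef, ← h]
    congr 1
    ring
  have haJKb : a = (J * K') * b := by rw [hadef, hsplit]; ring
  have hJK0 : 0 < J * K' := mul_pos hJ hK'
  have hc : a * b < 1 := by linarith
  have hc0 : 0 < 1 - a * b := by linarith
  have hkey : a ≤ b * (1 - a * b) := by
    nlinarith [mul_nonneg hb.le (show (0:ℝ) ≤ 1 - a * b - J * K' by linarith)]
  have hab : a ≤ b := by nlinarith [mul_pos ha hb]
  set D := 1 / (1 - a * b) with hDdef
  have hD0 : 0 < D := by positivity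
  have hD : D * (1 - a * b) = 1 := by
    rw [hDdef]; field_simp
  have key2 : a * D ≤ b := by
    calc a * D ≤ (b * (1 - a * b)) * D := mul_le_mul_of_nonneg_right hkey hD0.le
    _ = b := by linear_combination b * hD
  have hpow : ∀ m : ℕ, J ^ ((m : ℝ) * (q - 1)) = b ^ m := by
    intro m
    rw [hbdef, mul_comm, Real.rpow_mul hJ.le, Real.rpow_natCast]
  have claim : ∀ n : ℕ, 2 ≤ n →
      P (4 * n) ≤ D * ∑ m ∈ Finset.range (n - 1), b ^ m * G (4 * n - 4 * m)
        + b ^ (n - 1) * G 4 + b * P (4 * n + 4) := by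
    intro n hn
    induction n, hn using Nat.le_induction with
    | base =>
      have h2 := hrec 2 le_rfl
      norm_num at h2 ⊢
      have h1 : a * P 4 ≤ a * (G 4 + a * P 8) := mul_le_mul_of_nonneg_left hbase ha.le
      have step1 : (1 - a * b) * P 8 ≤ G 8 + (1 - a * b) * (b * G 4 + b * P 12) := by
        nlinarith [hP 8, hP 12, hG 4,
          mul_le_mul_of_nonneg_right hkey (hG 4),
          mul_le_mul_of_nonneg_right hkey (hP 12),
          mul_le_mul_of_nonneg_right (mul_le_mul_of_nonneg_left hab ha.le) (hP 8)]
      have e1 : D * ((1 - a * b) * P 8) = P 8 := by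
        linear_combination P 8 * hD
      have h3 := mul_le_mul_of_nonneg_left step1 hD0.le
      rw [e1] at h3
      have e2 : D * (G 8 + (1 - a * b) * (b * G 4 + b * P 12))
          = D * G 8 + b * G 4 + b * P 12 := by
        linear_combination (b * G 4 + b * P 12) * hD
      rw [e2] at h3
      linarith
    | succ n hn IH =>
      have h2 := hrec (n + 1) (by omega)
      rw [show 4 * (n + 1) - 4 = 4 * n by omega] at h2
      rw [show 4 * (n + 1) = 4 * n + 4 by ring] at h2 ⊢
      rw [show 4 * n + 4 + 4 = 4 * n + 8 by omega] at h2
      set S := ∑ m ∈ Finset.range (n - 1), b ^ m * G (4 * n - 4 * m) with hS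
      have hS0 : 0 ≤ S :=
        Finset.sum_nonneg fun m _ => mul_nonneg (pow_nonneg hb.le m) (hG _)
      have h1 := mul_le_mul_of_nonneg_left IH ha.le
      have hbn : b * b ^ (n - 1) = b ^ n := by
        rw [← pow_succ']
        congr 1
        omega
      have step1 : (1 - a * b) * P (4 * n + 4) ≤
          G (4 * n + 4) + b * S + (1 - a * b) * (b * (b ^ (n - 1) * G 4) + b * P (4 * n + 8)) := by
        nlinarith [hP (4 * n + 4), hP (4 * n + 8), hG 4, hS0,
          mul_le_mul_of_nonneg_right key2 hS0,
          mul_le_mul_of_nonneg_right hkey (mul_nonneg (pow_nonneg hb.le (n - 1)) (hG 4)),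
          mul_le_mul_of_nonneg_right hkey (hP (4 * n + 8))]
      rw [← mul_assoc, hbn] at step1
      have e1 : D * ((1 - a * b) * P (4 * n + 4)) = P (4 * n + 4) := by
        linear_combination P (4 * n + 4) * hD
      have h3 := mul_le_mul_of_nonneg_left step1 hD0.le
      rw [e1] at h3
      have e2 : D * (G (4 * n + 4) + b * S + (1 - a * b) * (b ^ n * G 4 + b * P (4 * n + 8)))
          = D * (G (4 * n + 4) + b * S) + b ^ n * G 4 + b * P (4 * n + 8) := by
        linear_combination (b ^ n * G 4 + b * P (4 * n + 8)) * hD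
      rw [e2] at h3
      have hsum : ∑ m ∈ Finset.range (n + 1 - 1), b ^ m * G (4 * n + 4 - 4 * m)
          = G (4 * n + 4) + b * S := by
        rw [show Finset.range (n + 1 - 1) = Finset.range (n - 1 + 1) by congr 1; omega,
          Finset.sum_range_succ']
        simp only [pow_zero, one_mul, Nat.mul_zero, Nat.sub_zero]
        rw [hS, Finset.mul_sum, add_comm]
        congr 1
        refine Finset.sum_congr rfl fun m hm => ?_
        rw [show 4 * n + 4 - 4 * (m + 1) = 4 * n - 4 * m by omega, pow_succ']
        ring
      rw [hsum, show n + 1 - 1 = n by omega]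
      exact h3
  intro n hn
  have h := claim n hn
  have e3 : ∑ m ∈ Finset.range (n - 1), J ^ ((m : ℝ) * (q - 1)) * G (4 * n - 4 * m)
      = ∑ m ∈ Finset.range (n - 1), b ^ m * G (4 * n - 4 * m) :=
    Finset.sum_congr rfl fun m _ => by rw [hpow]
  have e4 : J ^ (((n : ℝ) - 1) * (q - 1)) = b ^ (n - 1) := by
    rw [show ((n : ℝ) - 1) = ((n - 1 : ℕ) : ℝ) by
      push_cast [Nat.cast_sub (show 1 ≤ n by omega)]; ring, hpow]
  rw [e3, e4]
  exact h
end
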